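/- arXiv:2112.04549 — 5 statements merged into one kernel-verified Lean document; each statement's English description precedes it below -/
import Mathlib

section
/- Let G = (V,E) be a finite connected simple graph, let v, w ∈ V with δ(v,w) ≥ 2, and let ℓ(x) = min(δ(x,v), δ(x,w)) for x ∈ V. Let pred : V → V be a partial map (the predecessor map) satisfying: pred is undefined at v and at w; and whenever pred(b) = a, the vertices a and b are adjacent in G and ℓ(b) = ℓ(a) + 1. Call an edge {a,b} of G indispensable if pred(b) = a or pred(a) = b. Call a vertex x v-interesting if for every vertex z ≠ v with δ(v,z) + δ(z,x) = δ(v,x), every edge of G incident to z is indispensable (and define w-interesting symmetrically with w in place of v). Then for every integer k ≥ 1: every v-interesting vertex x with δ(v,x) = k satisfies δ(w,x) ≥ k + 2, and every w-interesting vertex x with δ(w,x) = k satisfies δ(v,x) ≥ k + 2; in particular, every such vertex x satisfies |δ(x,v) − δ(x,w)| ≥ 2, i.e., x distinguishes v and w. -/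
/-!
Induct on `k = δ(v, x)`: every vertex other than `v` on a shortest `v`–`x` path is again
`v`-interesting; the base case `x = v` is the hypothesis `δ(v, w) ≥ 2`. In the step let `x₀` be the
neighbour of `x` on that path, so `δ(w, x₀) ≥ k + 1` by induction, hence `ℓ(x₀) = k - 1` and
`ℓ(x) = k`. The edge `x₀x` is indispensable and `ℓ` rises along predecessor edges, so
`pred x = x₀`. If `δ(w, x) ≤ k + 1`, the neighbour `y` of `x` on a shortest `w`–`x` path has
`ℓ(y) ≤ δ(w, y) ≤ k`, so `pred y ≠ x`; the edge `xy` is indispensable, so `pred x = y`, i.e.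
`y = x₀`, contradicting `δ(w, x₀) ≥ k + 1`.
-/

namespace SimpleGraph

variable {V : Type*} (G : SimpleGraph V)

/-- The function `ℓ` of the paper. -/
noncomputable def minDist (v w x : V) : ℕ := min (G.dist x v) (G.dist x w)

def IsPredMap (v w : V) (pred : V → Option V) : Prop :=
  ∀ a b : V, pred b = some a → G.Adj a b ∧ G.minDist v w b = G.minDist v w a + 1

def IsIndispensable (pred : V → Option V) (a b : V) : Prop :=
  pred b = some a ∨ pred a = some b

def IsInteresting (pred : V → Option V) (v x : V) : Prop :=
  ∀ z : V, z ≠ v → G.dist v z + G.dist z x = G.dist v x →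
    ∀ y : V, G.Adj z y → IsIndispensable pred z y

variable {G}

theorem minDist_comm (v w x : V) : G.minDist v w x = G.minDist w v x := min_comm ..

theorem IsPredMap.symm {v w : V} {pred : V → Option V} (h : G.IsPredMap v w pred) :
    G.IsPredMap w v pred := by
  intro a b hab
  simpa only [minDist_comm v w] using h a b hab

theorem Connected.exists_adj_dist_add_one (hconn : G.Connected) {u x : V} (hux : u ≠ x) :
    ∃ y, G.Adj y x ∧ G.dist u y + 1 = G.dist u x := by
  obtain ⟨p, hp⟩ := hconn.exists_walk_length_eq_dist u x
  have hnil : ¬p.Nil := fun h => hux h.eq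
  have hadj := p.adj_penultimate hnil
  refine ⟨p.penultimate, hadj, ?_⟩
  have := G.dist_le p.dropLast
  have := p.length_dropLast_add_one hnil
  have := hadj.diff_dist_adj (u := u)
  omega

variable {pred : V → Option V} {v x : V}

theorem IsInteresting.of_adj (hconn : G.Connected) (hx : G.IsInteresting pred v x) {x₀ : V}
    (hadj : G.Adj x₀ x) (hd : G.dist v x₀ + 1 = G.dist v x) : G.IsInteresting pred v x₀ := by
  intro z hzv hz
  apply hx z hzv
  have := (dist_eq_one_iff_adj.mpr hadj : G.dist x₀ x = 1)
  have : G.dist z x ≤ G.dist z x₀ + G.dist x₀ x := hconn.dist_triangle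
  have : G.dist v x ≤ G.dist v z + G.dist z x := hconn.dist_triangle
  omega

theorem IsInteresting.isIndispensable (hx : G.IsInteresting pred v x) (hxv : x ≠ v) {y : V}
    (hadj : G.Adj x y) : IsIndispensable pred x y :=
  hx x hxv (by simp) y hadj

theorem IsInteresting.dist_add_two_le (hconn : G.Connected) {w : V} (hvw : 2 ≤ G.dist v w)
    (hpred : G.IsPredMap v w pred) (hx : G.IsInteresting pred v x) :
    G.dist v x + 2 ≤ G.dist w x := by
  induction hk : G.dist v x generalizing x with
  | zero =>
    obtain rfl : v = x := hconn.dist_eq_zero_iff.mp hk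
    rwa [dist_comm]
  | succ k ih =>
    have hxv : x ≠ v := by rintro rfl; simp at hk
    obtain ⟨x₀, hadj, hx₀⟩ := hconn.exists_adj_dist_add_one hxv.symm
    have hw₀ := ih (hx.of_adj hconn hadj hx₀) (by omega)
    have hw₁ := hadj.diff_dist_adj (u := w)
    have hℓx₀ : G.minDist v w x₀ = k := by
      rw [minDist, dist_comm, dist_comm (u := x₀)]; omega
    have hℓx : G.minDist v w x = k + 1 := by
      rw [minDist, dist_comm, dist_comm (u := x)]; omega
    have hpx : pred x = some x₀ :=
      (hx.isIndispensable hxv hadj.symm).resolve_left fun h => by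
        have := (hpred x x₀ h).2; omega
    by_contra! hlt
    obtain ⟨y, hadjy, hy⟩ := hconn.exists_adj_dist_add_one (u := w) (x := x) (by
      rintro rfl; simp at hw₁; omega)
    rcases hx.isIndispensable hxv hadjy.symm with h | h
    · have hℓy := (hpred x y h).2
      have : G.minDist v w y ≤ G.dist w y := dist_comm (G := G) ▸ min_le_right _ _
      omega
    · obtain rfl : x₀ = y := Option.some_injective _ (hpx ▸ h)
      omega

end SimpleGraph

open SimpleGraph in
theorem stmt_0_general {V : Type*} (G : SimpleGraph V) (hconn : G.Connected)
    (v w : V) (hvw : 2 ≤ G.dist v w)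
    (pred : V → Option V)
    (hpred : ∀ a b : V, pred b = some a →
      G.Adj a b ∧
        min (G.dist b v) (G.dist b w) = min (G.dist a v) (G.dist a w) + 1)
    (k : ℕ) (x : V) :
    ((∀ z : V, z ≠ v → G.dist v z + G.dist z x = G.dist v x →
        ∀ y : V, G.Adj z y → (pred y = some z ∨ pred z = some y)) →
      G.dist v x = k →
      k + 2 ≤ G.dist w x ∧ 2 ≤ |(G.dist x v : ℤ) - (G.dist x w : ℤ)|) ∧
    ((∀ z : V, z ≠ w → G.dist w z + G.dist z x = G.dist w x →
        ∀ y : V, G.Adj z y → (pred y = some z ∨ pred z = some y)) →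
      G.dist w x = k →
      k + 2 ≤ G.dist v x ∧ 2 ≤ |(G.dist x v : ℤ) - (G.dist x w : ℤ)|) := by
  have hpred : G.IsPredMap v w pred := hpred
  rw [dist_comm (u := x) (v := v), dist_comm (u := x) (v := w)]
  refine ⟨fun hx hk => ?_, fun hx hk => ?_⟩
  · have := IsInteresting.dist_add_two_le hconn hvw hpred hx
    refine ⟨by omega, le_abs.mpr ?_⟩
    omega
  · have := IsInteresting.dist_add_two_le hconn (dist_comm (G := G) ▸ hvw) hpred.symm hx
    refine ⟨by omega, le_abs.mpr ?_⟩
    omega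

/-- Interesting vertices distinguish `v` and `w` (Lemma 3.4 / `interesting-distinguish`). -/
theorem stmt_0 {V : Type*} [Fintype V] (G : SimpleGraph V) (hconn : G.Connected)
    (v w : V) (hvw : 2 ≤ G.dist v w)
    (pred : V → Option V)
    (hpredv : pred v = none) (hpredw : pred w = none)
    (hpred : ∀ a b : V, pred b = some a →
      G.Adj a b ∧
        min (G.dist b v) (G.dist b w) = min (G.dist a v) (G.dist a w) + 1)
    (k : ℕ) (hk : 1 ≤ k) (x : V) :
    ((∀ z : V, z ≠ v → G.dist v z + G.dist z x = G.dist v x →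
        ∀ y : V, G.Adj z y → (pred y = some z ∨ pred z = some y)) →
      G.dist v x = k →
      k + 2 ≤ G.dist w x ∧ 2 ≤ |(G.dist x v : ℤ) - (G.dist x w : ℤ)|) ∧
    ((∀ z : V, z ≠ w → G.dist w z + G.dist z x = G.dist w x →
        ∀ y : V, G.Adj z y → (pred y = some z ∨ pred z = some y)) →
      G.dist w x = k →
      k + 2 ≤ G.dist v x ∧ 2 ≤ |(G.dist x v : ℤ) - (G.dist x w : ℤ)|) :=
  stmt_0_general G hconn v w hvw pred hpred k x
end

section
/- Let G = (V,E) be a finite connected simple graph, let v, w ∈ V with δ(v,w) ≥ 2, and let ℓ(x) = min(δ(x,v), δ(x,w)). Let pred : V → V be a partial map satisfying: pred is undefined at v and at w; and whenever pred(b) = a, the vertices a and b are adjacent in G and ℓ(b) = ℓ(a) + 1. Call an edge {a,b} of G indispensable if pred(b) = a or pred(a) = b. Suppose a₀ = v, a₁, …, a_k is a shortest path in G from v (i.e., consecutive vertices are adjacent and δ(v, a_i) = i for all i) such that for every i ∈ {1, …, k}, every edge of G incident to a_i is indispensable. Then for every i ∈ {1, …, k}, pred(a_i) = a_{i−1} and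 ℓ(a_i) = i. -/
/-- Along a shortest path from `v` all of whose non-initial vertices have only
indispensable incident edges, each vertex's predecessor is the previous vertex,
and `ℓ` equals the index. -/
theorem stmt_1 {V : Type*} [Fintype V] (G : SimpleGraph V) (hconn : G.Connected)
    (v w : V) (hvw : 2 ≤ G.dist v w)
    (pred : V → Option V)
    (hpredv : pred v = none) (hpredw : pred w = none)
    (hpred : ∀ a b : V, pred b = some a →
      G.Adj a b ∧
        min (G.dist b v) (G.dist b w) = min (G.dist a v) (G.dist a w) + 1)
    (k : ℕ) (a : ℕ → V) (ha0 : a 0 = v)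
    (hadj : ∀ i < k, G.Adj (a i) (a (i + 1)))
    (hdist : ∀ i ≤ k, G.dist v (a i) = i)
    (hind : ∀ i, 1 ≤ i → i ≤ k →
      ∀ y : V, G.Adj (a i) y → (pred y = some (a i) ∨ pred (a i) = some y)) :
    ∀ i, 1 ≤ i → i ≤ k →
      pred (a i) = some (a (i - 1)) ∧
        min (G.dist (a i) v) (G.dist (a i) w) = i := by
  intro i
  induction i with
  | zero => intro h; omega
  | succ n ih =>
    intro _ hnk
    rcases Nat.eq_zero_or_pos n with hn | hn
    · subst hn
      have hadj01 : G.Adj (a 0) (a 1) := hadj 0 (by omega)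
      rcases hind 1 le_rfl hnk (a 0) hadj01.symm with h | h
      · rw [ha0, hpredv] at h; exact absurd h (by simp)
      · have hp := hpred (a 0) (a 1) h
        refine ⟨h, ?_⟩
        rw [hp.2, ha0]
        simp [SimpleGraph.dist_self]
    · obtain ⟨hpn, hln⟩ := ih hn (by omega)
      have hadjn : G.Adj (a n) (a (n + 1)) := hadj n (by omega)
      rcases hind (n + 1) (by omega) hnk (a n) hadjn.symm with h | h
      · rw [hpn] at h
        have heq : a (n + 1) = a (n - 1) := by
          simpa using h.symm
        have h1 : G.dist v (a (n + 1)) = n + 1 := hdist (n + 1) hnk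
        have h2 : G.dist v (a (n - 1)) = n - 1 := hdist (n - 1) (by omega)
        rw [heq, h2] at h1
        omega
      · have hp := hpred (a n) (a (n + 1)) h
        refine ⟨by simpa using h, ?_⟩
        rw [hp.2, hln]
end

section
/- Let n ≥ 3 and let C_n be the cycle graph on n vertices (vertex set ℤ/nℤ, with i adjacent to i+1 and i−1). Then for every pair of vertices v, w of C_n with δ(v,w) ≥ 2, the number of vertices u with |δ(u,v) − δ(u,w)| ≥ 2 is at least n − 4. -/
/-!
The distance in `C_n` is `dist a b = min (a - b).val (n - (a - b).val)`: walks from `a` to `b`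
are integer paths `z ≡ b - a`, and the shortest such `z` is `(b - a).valMinAbs`. Measuring
positions from `v`, with `w` at offset `k ∈ [2, n - 2]`, a vertex at offset `a` has distances
`min a (n - a)` to `v` and `min b (n - b)` to `w`, where `b ≡ a - k`; these differ by at most
one only when `2a` is within one of `k` or of `n + k`, i.e. only for the four offsets
`k / 2`, `(k + 1) / 2`, `(n + k) / 2`, `(n + k + 1) / 2` near the two midpoints of `v` and `w`.
-/

/-- The cycle graph on `ZMod n`: `i` is adjacent to `i + 1` and `i - 1`. -/
def cycleGraphZMod (n : ℕ) : SimpleGraph (ZMod n) :=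
  SimpleGraph.fromRel (fun i j => j = i + 1)

theorem ZMod.val_sub_cases {n : ℕ} [NeZero n] (a b : ZMod n) :
    b.val ≤ a.val ∧ (a - b).val = a.val - b.val ∨
      a.val < b.val ∧ (a - b).val = a.val + n - b.val := by
  rcases le_or_gt b.val a.val with h | h
  · exact .inl ⟨h, ZMod.val_sub h⟩
  · refine .inr ⟨h, ?_⟩
    have hba : b - a ≠ 0 := sub_ne_zero.mpr fun hab => h.ne (by rw [hab])
    rw [← neg_sub, ZMod.neg_val, if_neg hba, ZMod.val_sub h.le]
    have := b.val_lt
    omega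

theorem eq_half_of_abs_min_sub_min_lt_two {n k a b : ℕ} (ha : a < n) (hk : 2 ≤ k)
    (hkn : k + 2 ≤ n)
    (hb : k ≤ a ∧ b = a - k ∨ a < k ∧ b = a + n - k)
    (h : |((min a (n - a) : ℕ) : ℤ) - (min b (n - b) : ℕ)| < 2) :
    a = k / 2 ∨ a = (k + 1) / 2 ∨ a = (n + k) / 2 ∨ a = (n + k + 1) / 2 := by
  rw [abs_lt] at h
  omega

namespace cycleGraphZMod

open SimpleGraph

variable {n : ℕ}

theorem adj_add_one (hn : n ≠ 1) (a : ZMod n) : (cycleGraphZMod n).Adj a (a + 1) :=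
  ⟨fun h => hn (ZMod.one_eq_zero_iff.mp (by linear_combination -h)), .inl rfl⟩

theorem exists_walk_length_eq_natAbs (hn : n ≠ 1) {a b : ZMod n} (z : ℤ)
    (hz : (z : ZMod n) = b - a) : ∃ p : (cycleGraphZMod n).Walk a b, p.length = z.natAbs := by
  induction z using Int.induction_on generalizing b with
  | zero => exact ⟨Walk.nil.copy rfl (by linear_combination hz), by simp⟩
  | succ i ih =>
    obtain ⟨p, hp⟩ := ih (b := b - 1) (by push_cast at hz ⊢; linear_combination hz)
    refine ⟨(p.concat (adj_add_one hn _)).copy rfl (sub_add_cancel b 1), ?_⟩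
    simp only [Walk.length_copy, Walk.length_concat, hp]
    omega
  | pred i ih =>
    obtain ⟨p, hp⟩ := ih (b := b + 1) (by push_cast at hz ⊢; linear_combination hz)
    refine ⟨p.concat (adj_add_one hn b).symm, ?_⟩
    simp only [Walk.length_concat, hp]
    omega

theorem exists_intCast_eq_sub_natAbs_le {a b : ZMod n} (p : (cycleGraphZMod n).Walk a b) :
    ∃ z : ℤ, (z : ZMod n) = b - a ∧ z.natAbs ≤ p.length := by
  induction p with
  | nil => exact ⟨0, by simp, by simp⟩
  | @cons a c b h p ih =>
    obtain ⟨z, hz, hlen⟩ := ih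
    rcases h.2 with hc | hc
    · refine ⟨z + 1, by push_cast [hz, hc]; ring, ?_⟩
      simp only [Walk.length_cons]
      omega
    · refine ⟨z - 1, by push_cast [hz, hc]; ring, ?_⟩
      simp only [Walk.length_cons]
      omega

theorem dist_eq_natAbs_valMinAbs [NeZero n] (a b : ZMod n) :
    (cycleGraphZMod n).dist a b = (b - a).valMinAbs.natAbs := by
  rcases eq_or_ne n 1 with rfl | hn
  · simp [Subsingleton.elim a b]
  obtain ⟨p, hp⟩ := exists_walk_length_eq_natAbs hn _ (b - a).coe_valMinAbs
  refine le_antisymm (hp ▸ dist_le p) ?_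
  obtain ⟨q, hq⟩ := p.reachable.exists_walk_length_eq_dist
  obtain ⟨z, hz, hzq⟩ := exists_intCast_eq_sub_natAbs_le q
  calc (b - a).valMinAbs.natAbs
      ≤ z.natAbs := ZMod.natAbs_min_of_le_div_two n _ _ ((b - a).coe_valMinAbs.trans hz.symm)
        (ZMod.natAbs_valMinAbs_le _)
    _ ≤ _ := hq ▸ hzq

theorem dist_eq_min_val [NeZero n] (a b : ZMod n) :
    (cycleGraphZMod n).dist a b = min (a - b).val (n - (a - b).val) := by
  rw [dist_comm, dist_eq_natAbs_valMinAbs, ZMod.valMinAbs_natAbs_eq_min]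

theorem ncard_setOf_abs_sub_dist_lt_two_le_four [NeZero n] {v w : ZMod n}
    (hvw : 2 ≤ (cycleGraphZMod n).dist v w) :
    {u | |((cycleGraphZMod n).dist u v : ℤ) - (cycleGraphZMod n).dist u w| < 2}.ncard ≤ 4 := by
  set k := (w - v).val
  have hk : 2 ≤ k ∧ k + 2 ≤ n := by
    rw [dist_comm, dist_eq_min_val] at hvw
    have := (w - v).val_lt
    omega
  let midpoints : Finset ℕ := {k / 2, (k + 1) / 2, (n + k) / 2, (n + k + 1) / 2}
  have hsub : {u | |((cycleGraphZMod n).dist u v : ℤ) - (cycleGraphZMod n).dist u w| < 2} ⊆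
      midpoints.image fun m : ℕ => v + (m : ZMod n) := by
    intro u hu
    rw [Set.mem_ofPred_eq, dist_eq_min_val, dist_eq_min_val,
      show u - w = (u - v) - (w - v) by ring] at hu
    have hval := (u - v).val_lt
    have hmid := eq_half_of_abs_min_sub_min_lt_two hval hk.1 hk.2 (ZMod.val_sub_cases _ _) hu
    simp only [Finset.coe_image, Set.mem_image, Finset.mem_coe]
    exact ⟨(u - v).val, by simpa [midpoints] using hmid, by simp⟩
  calc _ ≤ (midpoints.image fun m : ℕ => v + (m : ZMod n)).card := by
        rw [← Set.ncard_coe_finset]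
        exact Set.ncard_le_ncard hsub
    _ ≤ midpoints.card := Finset.card_image_le
    _ ≤ 4 := Finset.card_le_four

end cycleGraphZMod

/-- In the cycle `C_n` (`n ≥ 3`), any pair of vertices at distance at least 2 is
distinguished by at least `n − 4` vertices. -/
theorem stmt_6 (n : ℕ) (hn : 3 ≤ n) (v w : ZMod n)
    (hvw : 2 ≤ (cycleGraphZMod n).dist v w) :
    (n : ℤ) - 4 ≤
      ({u : ZMod n |
        2 ≤ |((cycleGraphZMod n).dist u v : ℤ) - ((cycleGraphZMod n).dist u w : ℤ)|}.ncard : ℤ) := by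
  have : NeZero n := ⟨by omega⟩
  have hpartition := Set.ncard_add_ncard_compl
    {u : ZMod n | 2 ≤ |((cycleGraphZMod n).dist u v : ℤ) - ((cycleGraphZMod n).dist u w : ℤ)|}
  simp only [Set.compl_ofPred, not_le, Nat.card_zmod] at hpartition
  have := cycleGraphZMod.ncard_setOf_abs_sub_dist_lt_two_le_four hvw
  omega
end

section
/- Let G = (V,E) be a finite connected simple graph and let S ⊆ V. Suppose: (i) for every pair of vertices a ≠ b with δ(a,b) ≥ 2, there exists u ∈ S with |δ(u,a) − δ(u,b)| ≥ 2; and (ii) for every ordered pair of adjacent vertices (a,b), there exists a vertex c with c ≠ a, c ≠ b, such that c is adjacent to b and c is not adjacent to a. Then S is a resolving set for G: for every pair of vertices a ≠ b, there exists u ∈ S with δ(u,a) ≠ δ(u,b). -/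
/-- If `S` distinguishes all vertex pairs at distance at least 2, and every edge
`(a,b)` has a vertex `c ∉ {a,b}` adjacent to `b` but not to `a`, then `S` is a
resolving set. -/
theorem stmt_7 {V : Type*} [Fintype V] (G : SimpleGraph V) (hconn : G.Connected)
    (S : Set V)
    (h1 : ∀ a b : V, a ≠ b → 2 ≤ G.dist a b →
      ∃ u ∈ S, 2 ≤ |(G.dist u a : ℤ) - (G.dist u b : ℤ)|)
    (h2 : ∀ a b : V, G.Adj a b →
      ∃ c : V, c ≠ a ∧ c ≠ b ∧ G.Adj b c ∧ ¬ G.Adj a c) :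
    ∀ a b : V, a ≠ b → ∃ u ∈ S, G.dist u a ≠ G.dist u b := by
  intro a b hab
  by_cases hd : 2 ≤ G.dist a b
  · obtain ⟨u, hu, h⟩ := h1 a b hab hd
    exact ⟨u, hu, fun heq => by simp [heq] at h⟩
  · -- dist a b = 1, so a,b adjacent
    have hpos : 0 < G.dist a b := hconn.pos_dist_of_ne hab
    have hone : G.dist a b = 1 := by omega
    have hadj : G.Adj a b := (SimpleGraph.dist_eq_one_iff_adj).mp hone
    obtain ⟨c, hca, hcb, hbc, hnac⟩ := h2 a b hadj
    have hac2 : 2 ≤ G.dist a c := by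
      have hpos' : 0 < G.dist a c := hconn.pos_dist_of_ne (Ne.symm hca)
      have : G.dist a c ≠ 1 := fun h => hnac (SimpleGraph.dist_eq_one_iff_adj.mp h)
      omega
    obtain ⟨u, hu, h⟩ := h1 a c (Ne.symm hca) hac2
    refine ⟨u, hu, fun heq => ?_⟩
    have hbc1 : G.dist b c = 1 := SimpleGraph.dist_eq_one_iff_adj.mpr hbc
    have t1 : G.dist u c ≤ G.dist u b + 1 := by
      have := hconn.dist_triangle (u := u) (v := b) (w := c); omega
    have t2 : G.dist u b ≤ G.dist u c + 1 := by
      have := hconn.dist_triangle (u := u) (v := c) (w := b)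
      have hcb1 : G.dist c b = 1 := by rwa [SimpleGraph.dist_comm]
      omega
    rw [heq] at h
    rcases abs_cases ((G.dist u b : ℤ) - G.dist u c) with ⟨he, _⟩ | ⟨he, _⟩ <;> rw [he] at h <;> omega
end

section
/- Let G = (V,E) be a finite connected simple graph in which every vertex has degree at most Δ, where Δ ≥ 2, let a ∈ V, and let K ≥ 0 be a real number. Let B(a) denote the set of vertices b ∈ V such that δ(a,b) ≥ 2 and |D(a,b)| ≤ K. Then |B(a)| ≤ Δ³·K². -/
open Finset

lemma mid_vertex {V : Type*} (G : SimpleGraph V) (hconn : G.Connected) (a b : V) :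
    ∀ j, j ≤ G.dist a b → ∃ v, G.dist a v = j ∧ G.dist v b = G.dist a b - j := by
  intro j
  induction j with
  | zero => intro _; exact ⟨a, by simp, by simp⟩
  | succ j ih =>
    intro hj
    obtain ⟨v, hav, hvb⟩ := ih (Nat.le_of_succ_le hj)
    obtain ⟨p, hp⟩ := hconn.exists_walk_length_eq_dist v b
    cases p with
    | nil => simp at hp; omega
    | @cons _ w _ h q =>
      have hql : q.length + 1 = G.dist v b := by simpa using hp
      have hwb : G.dist w b ≤ q.length := SimpleGraph.dist_le q
      have hvw : G.dist v w = 1 := SimpleGraph.dist_eq_one_iff_adj.mpr h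
      have haw : G.dist a w ≤ G.dist a v + G.dist v w := hconn.dist_triangle
      have htri : G.dist a b ≤ G.dist a w + G.dist w b := hconn.dist_triangle
      exact ⟨w, by omega, by omega⟩

lemma sphere_mul {V : Type*} [Fintype V] [DecidableEq V] (G : SimpleGraph V)
    [DecidableRel G.Adj] (hconn : G.Connected) (Δ : ℕ) (hdeg : ∀ x, G.degree x ≤ Δ)
    (a : V) (i : ℕ) :
    (univ.filter (fun v => G.dist a v = i + 1) : Finset V).card ≤
      Δ * (univ.filter (fun v => G.dist a v = i) : Finset V).card := by
  set S : ℕ → Finset V := fun n => univ.filter (fun v => G.dist a v = n) with hS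
  have hsub : S (i + 1) ⊆ (S i).biUnion (fun u => G.neighborFinset u ∩ S (i + 1)) := by
    intro x hx
    have hx' : G.dist a x = i + 1 := by simpa [hS] using hx
    obtain ⟨v, hav, hvx⟩ := mid_vertex G hconn a x i (by omega)
    have hadj : G.Adj v x := SimpleGraph.dist_eq_one_iff_adj.mp (by omega)
    exact mem_biUnion.mpr ⟨v, by simp [hS, hav],
      mem_inter.mpr ⟨(G.mem_neighborFinset v x).mpr hadj, hx⟩⟩
  calc (S (i + 1)).card ≤ ((S i).biUnion (fun u => G.neighborFinset u ∩ S (i + 1))).card :=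
        card_le_card hsub
    _ ≤ ∑ u ∈ S i, (G.neighborFinset u ∩ S (i + 1)).card := card_biUnion_le
    _ ≤ ∑ u ∈ S i, Δ := by
        refine sum_le_sum fun u _ => ?_
        calc (G.neighborFinset u ∩ S (i + 1)).card ≤ (G.neighborFinset u).card :=
              card_le_card inter_subset_left
          _ = G.degree u := G.card_neighborFinset_eq_degree u
          _ ≤ Δ := hdeg u
    _ = Δ * (S i).card := by rw [sum_const, smul_eq_mul, mul_comm]

lemma sphere_mul' {V : Type*} [Fintype V] [DecidableEq V] (G : SimpleGraph V)
    [DecidableRel G.Adj] (hconn : G.Connected) (Δ : ℕ) (hdeg : ∀ x, G.degree x ≤ Δ)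
    (a : V) (i : ℕ) (hi : 1 ≤ i) :
    (univ.filter (fun v => G.dist a v = i + 1) : Finset V).card ≤
      (Δ - 1) * (univ.filter (fun v => G.dist a v = i) : Finset V).card := by
  set S : ℕ → Finset V := fun n => univ.filter (fun v => G.dist a v = n) with hS
  have hsub : S (i + 1) ⊆ (S i).biUnion (fun u => G.neighborFinset u ∩ S (i + 1)) := by
    intro x hx
    have hx' : G.dist a x = i + 1 := by simpa [hS] using hx
    obtain ⟨v, hav, hvx⟩ := mid_vertex G hconn a x i (by omega)
    have hadj : G.Adj v x := SimpleGraph.dist_eq_one_iff_adj.mp (by omega)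
    exact mem_biUnion.mpr ⟨v, by simp [hS, hav],
      mem_inter.mpr ⟨(G.mem_neighborFinset v x).mpr hadj, hx⟩⟩
  calc (S (i + 1)).card ≤ ((S i).biUnion (fun u => G.neighborFinset u ∩ S (i + 1))).card :=
        card_le_card hsub
    _ ≤ ∑ u ∈ S i, (G.neighborFinset u ∩ S (i + 1)).card := card_biUnion_le
    _ ≤ ∑ u ∈ S i, (Δ - 1) := by
        refine sum_le_sum fun u hu => ?_
        have hu' : G.dist a u = i := by simpa [hS] using hu
        obtain ⟨w, haw, hwu⟩ := mid_vertex G hconn a u (i - 1) (by omega)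
        have hadj : G.Adj u w := SimpleGraph.dist_eq_one_iff_adj.mp
          (by rw [SimpleGraph.dist_comm]; omega)
        have hwmem : w ∈ G.neighborFinset u := (G.mem_neighborFinset u w).mpr hadj
        have hsubset : G.neighborFinset u ∩ S (i + 1) ⊆ (G.neighborFinset u).erase w := by
          intro x hx
          rw [mem_inter] at hx
          refine mem_erase.mpr ⟨?_, hx.1⟩
          intro hxw
          have : G.dist a x = i + 1 := by simpa [hS] using hx.2
          subst hxw
          omega
        calc (G.neighborFinset u ∩ S (i + 1)).card ≤ ((G.neighborFinset u).erase w).card :=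
              card_le_card hsubset
          _ = (G.neighborFinset u).card - 1 := card_erase_of_mem hwmem
          _ = G.degree u - 1 := by rw [G.card_neighborFinset_eq_degree u]
          _ ≤ Δ - 1 := by have := hdeg u; omega
    _ = (Δ - 1) * (S i).card := by rw [sum_const, smul_eq_mul, mul_comm]

/-- Bound on `|B(a)|` for bounded-degree graphs (Lemma 6.1). -/
theorem stmt_8 {V : Type*} [Fintype V] [DecidableEq V] (G : SimpleGraph V)
    [DecidableRel G.Adj] (hconn : G.Connected)
    (Δ : ℕ) (hΔ : 2 ≤ Δ) (hdeg : ∀ x : V, G.degree x ≤ Δ)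
    (a : V) (K : ℝ) (hK : 0 ≤ K) :
    (({b : V | 2 ≤ G.dist a b ∧
        (({u : V | 2 ≤ |(G.dist u a : ℤ) - (G.dist u b : ℤ)|}.ncard : ℝ) ≤ K)}.ncard : ℝ)) ≤
      (Δ : ℝ) ^ 3 * K ^ 2 := by
  classical
  set Dset : V → Finset V :=
    fun b => univ.filter (fun u => 2 ≤ |(G.dist u a : ℤ) - (G.dist u b : ℤ)|) with hDset
  have hD : ∀ b : V, ({u : V | 2 ≤ |(G.dist u a : ℤ) - (G.dist u b : ℤ)|}.ncard)
      = (Dset b).card := by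
    intro b
    rw [← Set.ncard_coe_finset]
    congr 1
    ext u
    simp [hDset]
  set B : Finset V := univ.filter (fun b => 2 ≤ G.dist a b ∧ ((Dset b).card : ℝ) ≤ K) with hBdef
  have hBset : {b : V | 2 ≤ G.dist a b ∧
      (({u : V | 2 ≤ |(G.dist u a : ℤ) - (G.dist u b : ℤ)|}.ncard : ℝ) ≤ K)} = ↑B := by
    ext b
    simp [hBdef, hD b]
  rw [hBset, Set.ncard_coe_finset]
  rcases B.eq_empty_or_nonempty with hBe | hBne
  · rw [hBe]
    simp only [card_empty, Nat.cast_zero]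
    positivity
  have hBmem : ∀ b ∈ B, 2 ≤ G.dist a b ∧ ((Dset b).card : ℝ) ≤ K := by
    intro b hb
    simpa [hBdef] using hb
  obtain ⟨b₀, hb₀B, hb₀max⟩ := B.exists_max_image (fun b => G.dist a b) hBne
  have hb₀2 : 2 ≤ G.dist a b₀ := (hBmem b₀ hb₀B).1
  set S : ℕ → Finset V := fun n => univ.filter (fun v => G.dist a v = n) with hS
  set dmax := G.dist a b₀ with hdmax
  set M := (dmax - 2) / 2 with hM
  set k := (Dset b₀).card with hk
  -- choose midpoint vertices
  have hmid : ∀ b : V, ∃ v : V, 2 ≤ G.dist a b →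
      G.dist a v = G.dist a b - (G.dist a b - 2) / 2 ∧
      G.dist v b = (G.dist a b - 2) / 2 := by
    intro b
    by_cases hb : 2 ≤ G.dist a b
    · obtain ⟨v, h1, h2⟩ := mid_vertex G hconn a b (G.dist a b - (G.dist a b - 2) / 2) (by omega)
      exact ⟨v, fun _ => ⟨h1, by omega⟩⟩
    · exact ⟨a, fun h => absurd h hb⟩
  choose Φ hΦ using hmid
  set ψ : V → V × ℕ := fun b => (Φ b, G.dist a b) with hψ
  -- fiber bound
  have hfiber : ∀ p ∈ B.image ψ, ((B.filter (fun b => ψ b = p)).card : ℝ) ≤ K := by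
    intro p hp
    obtain ⟨b, hbB, hbp⟩ := mem_image.mp hp
    have hb2 := (hBmem b hbB).1
    obtain ⟨hΦb1, hΦb2⟩ := hΦ b hb2
    have hsub : B.filter (fun b' => ψ b' = p) ⊆ Dset b := by
      intro b' hb'
      rw [mem_filter] at hb'
      obtain ⟨hb'B, hb'p⟩ := hb'
      have hb'2 := (hBmem b' hb'B).1
      obtain ⟨hΦb'1, hΦb'2⟩ := hΦ b' hb'2
      rw [← hbp] at hb'p
      have heqv : Φ b' = Φ b := congrArg Prod.fst hb'p
      have heqd : G.dist a b' = G.dist a b := congrArg Prod.snd hb'p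
      rw [heqv] at hΦb'2
      have htri : G.dist b' b ≤ G.dist b' (Φ b) + G.dist (Φ b) b := hconn.dist_triangle
      have hcomm : G.dist b' (Φ b) = G.dist (Φ b) b' := SimpleGraph.dist_comm
      have hda : G.dist b' a = G.dist a b' := SimpleGraph.dist_comm
      simp only [hDset, mem_filter, mem_univ, true_and]
      have habs := le_abs_self ((G.dist b' a : ℤ) - (G.dist b' b : ℤ))
      omega
    calc ((B.filter (fun b' => ψ b' = p)).card : ℝ) ≤ ((Dset b).card : ℝ) :=
          Nat.cast_le.mpr (card_le_card hsub)
      _ ≤ K := (hBmem b hbB).2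
  have hcard1 : (B.card : ℝ) ≤ ((B.image ψ).card : ℝ) * K := by
    rw [card_eq_sum_card_image ψ B]
    push_cast
    calc ∑ p ∈ B.image ψ, ((B.filter (fun b => ψ b = p)).card : ℝ)
        ≤ ∑ p ∈ B.image ψ, K := sum_le_sum hfiber
      _ = ((B.image ψ).card : ℝ) * K := by rw [sum_const, nsmul_eq_mul]
  -- image bound
  have hmono : ∀ b ∈ B, (G.dist a b - 2) / 2 ≤ M := by
    intro b hb
    have := hb₀max b hb
    omega
  have himsub : B.image ψ ⊆ (range (M + 1)).biUnion
      (fun m => (S (m + 2)) ×ˢ ({2 * m + 2} : Finset ℕ) ∪ (S (m + 3)) ×ˢ {2 * m + 3}) := by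
    intro p hp
    obtain ⟨b, hbB, hbp⟩ := mem_image.mp hp
    have hb2 := (hBmem b hbB).1
    obtain ⟨hΦ1, hΦ2⟩ := hΦ b hb2
    have hmle := hmono b hbB
    rw [mem_biUnion]
    refine ⟨(G.dist a b - 2) / 2, mem_range.mpr (by omega), ?_⟩
    rw [← hbp]
    have hd : G.dist a b = 2 * ((G.dist a b - 2) / 2) + 2 ∨
        G.dist a b = 2 * ((G.dist a b - 2) / 2) + 3 := by omega
    rcases hd with hd | hd
    · refine mem_union_left _ (mem_product.mpr ⟨?_, ?_⟩)
      · show Φ b ∈ S _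
        simp only [hS, mem_filter, mem_univ, true_and]
        omega
      · simp only [hψ, mem_singleton]
        omega
    · refine mem_union_right _ (mem_product.mpr ⟨?_, ?_⟩)
      · show Φ b ∈ S _
        simp only [hS, mem_filter, mem_univ, true_and]
        omega
      · simp only [hψ, mem_singleton]
        omega
  have him2 : ((range (M + 1)).biUnion
      (fun m => (S (m + 2)) ×ˢ ({2 * m + 2} : Finset ℕ) ∪ (S (m + 3)) ×ˢ {2 * m + 3})).card
      ≤ ∑ m ∈ range (M + 1), ((S (m + 2)).card + (S (m + 3)).card) := by
    refine card_biUnion_le.trans (sum_le_sum fun m _ => ?_)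
    calc ((S (m + 2)) ×ˢ ({2 * m + 2} : Finset ℕ) ∪ (S (m + 3)) ×ˢ {2 * m + 3}).card
        ≤ ((S (m + 2)) ×ˢ ({2 * m + 2} : Finset ℕ)).card
          + ((S (m + 3)) ×ˢ ({2 * m + 3} : Finset ℕ)).card := card_union_le _ _
      _ = (S (m + 2)).card + (S (m + 3)).card := by simp [card_product]
  obtain ⟨c, hc⟩ : ∃ c, Δ = c + 1 := ⟨Δ - 1, by omega⟩
  have hgrow : ∀ m : ℕ, (S (m + 2)).card + (S (m + 3)).card
      ≤ Δ ^ 2 * (Δ - 1) * (S m).card := by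
    intro m
    have e1 : (S (m + 1)).card ≤ Δ * (S m).card := by
      simpa only [hS] using sphere_mul G hconn Δ hdeg a m
    have e2 : (S (m + 2)).card ≤ (Δ - 1) * (S (m + 1)).card := by
      simpa only [hS] using sphere_mul' G hconn Δ hdeg a (m + 1) (by omega)
    have e3 : (S (m + 3)).card ≤ (Δ - 1) * (S (m + 2)).card := by
      simpa only [hS] using sphere_mul' G hconn Δ hdeg a (m + 2) (by omega)
    simp only [hc, Nat.add_sub_cancel] at e1 e2 e3 ⊢
    have f2 : (S (m + 2)).card ≤ c * ((c + 1) * (S m).card) :=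
      le_trans e2 (Nat.mul_le_mul le_rfl e1)
    have f3 : (S (m + 3)).card ≤ c * (c * ((c + 1) * (S m).card)) :=
      le_trans e3 (Nat.mul_le_mul le_rfl f2)
    calc (S (m + 2)).card + (S (m + 3)).card
        ≤ c * ((c + 1) * (S m).card) + c * (c * ((c + 1) * (S m).card)) := add_le_add f2 f3
      _ = (c + 1) ^ 2 * c * (S m).card := by ring
  have hdisj : ∀ m1 ∈ range (M + 1), ∀ m2 ∈ range (M + 1), m1 ≠ m2 → Disjoint (S m1) (S m2) := by
    intro m1 _ m2 _ hne
    rw [disjoint_left]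
    intro x hx1 hx2
    simp only [hS, mem_filter, mem_univ, true_and] at hx1 hx2
    omega
  have hball : ∑ m ∈ range (M + 1), (S m).card ≤ k := by
    rw [← card_biUnion hdisj]
    refine le_trans (card_le_card ?_) hk.ge
    intro u hu
    obtain ⟨m, hm, hum⟩ := mem_biUnion.mp hu
    have hum' : G.dist a u = m := by simpa only [hS, mem_filter, mem_univ, true_and] using hum
    have hmM : m ≤ M := by rw [mem_range] at hm; omega
    have htri : G.dist a b₀ ≤ G.dist a u + G.dist u b₀ := hconn.dist_triangle
    have hua : G.dist u a = G.dist a u := SimpleGraph.dist_comm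
    simp only [hDset, mem_filter, mem_univ, true_and]
    have habs := neg_le_abs ((G.dist u a : ℤ) - (G.dist u b₀ : ℤ))
    omega
  have him : (B.image ψ).card ≤ Δ ^ 3 * k := by
    calc (B.image ψ).card
        ≤ _ := card_le_card himsub
      _ ≤ ∑ m ∈ range (M + 1), ((S (m + 2)).card + (S (m + 3)).card) := him2
      _ ≤ ∑ m ∈ range (M + 1), Δ ^ 2 * (Δ - 1) * (S m).card :=
          sum_le_sum fun m _ => hgrow m
      _ = Δ ^ 2 * (Δ - 1) * ∑ m ∈ range (M + 1), (S m).card := by rw [mul_sum]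
      _ ≤ Δ ^ 2 * (Δ - 1) * k := Nat.mul_le_mul le_rfl hball
      _ ≤ Δ ^ 3 * k := by
          refine Nat.mul_le_mul ?_ le_rfl
          calc Δ ^ 2 * (Δ - 1) ≤ Δ ^ 2 * Δ := Nat.mul_le_mul le_rfl (by omega)
            _ = Δ ^ 3 := by ring
  have hkK : (k : ℝ) ≤ K := (hBmem b₀ hb₀B).2
  calc (B.card : ℝ) ≤ ((B.image ψ).card : ℝ) * K := hcard1
    _ ≤ ((Δ ^ 3 * k : ℕ) : ℝ) * K := mul_le_mul_of_nonneg_right (Nat.cast_le.mpr him) hK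
    _ = (Δ : ℝ) ^ 3 * (k : ℝ) * K := by push_cast; ring
    _ ≤ (Δ : ℝ) ^ 3 * K * K := by
        have h3 : (0 : ℝ) ≤ (Δ : ℝ) ^ 3 := by positivity
        nlinarith [mul_le_mul_of_nonneg_left (mul_le_mul_of_nonneg_right hkK hK) h3]
    _ = (Δ : ℝ) ^ 3 * K ^ 2 := by ring
end
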